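/- Let G be a finite digraph and a, b vertices of G. Set A := N⁺(a) \ {b}, B := N⁻(b) \ {a}, let H := Ind(A \ B, B \ A) with connected components H₁,…,H_t (as an undirected graph), and for each k let S_k be the set of edges of G that either start in V(H_k) ∩ (A \ B) and end in (N⁺(a) ∪ {a}) ∩ N⁻(b), or start in N⁺(a) ∩ (N⁻(b) ∪ {b}) and end in V(H_k) ∩ (B \ A). If |S_k| ≥ 2, then for every pair of distinct edges (u,v), (u',v') ∈ S_k there exists ω ∈ Ω₃^{(a,b)}(G) such that the coefficients of e_{a u v b} and of e_{a u' v' b} in ω are nonzero, and every other elementary 3-path e_{a x y b} occurring in ω with nonzero coefficient satisfies x ∈ V(H_k) ∩ (A \ B), y ∈ V(H_k) ∩ (B \ A), and x → y. -/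

import Mathlib

open scoped BigOperators
open Classical

/-- A digraph: an irreflexive relation on a vertex type. -/
structure Dgraph (V : Type*) where
  Adj : V → V → Prop
  loopless : ∀ v : V, ¬ Adj v v

/-- An elementary `p`-path on the vertex type `V`: a sequence of `p+1` vertices. -/
abbrev EPath (V : Type*) (p : ℕ) := Fin (p + 1) → V

/-- A path is regular if consecutive vertices are distinct. -/
def IsRegularPath {V : Type*} {p : ℕ} (f : EPath V p) : Prop :=
  ∀ k : Fin p, f k.castSucc ≠ f k.succ

/-- A path is allowed if consecutive vertices are joined by an arrow. -/
def IsAllowedPath {V : Type*} (G : Dgraph V) {p : ℕ} (f : EPath V p) : Prop :=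
  ∀ k : Fin p, G.Adj (f k.castSucc) (f k.succ)

/-- The projection of `Λ_p` onto its regular part; this realizes `R_p = Λ_p / I_p`
as the subspace of `Λ_p` spanned by the regular elementary paths. -/
noncomputable def regProj (K : Type*) [Field K] (V : Type*) (p : ℕ) :
    (EPath V p →₀ K) →ₗ[K] (EPath V p →₀ K) :=
  Finsupp.linearCombination K
    (fun f : EPath V p => if IsRegularPath f then Finsupp.single f (1 : K) else 0)

/-- The (non-reduced) boundary operator on `Λ`. -/
noncomputable def bdryFull (K : Type*) [Field K] (V : Type*) (p : ℕ) :
    (EPath V (p + 1) →₀ K) →ₗ[K] (EPath V p →₀ K) :=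
  Finsupp.linearCombination K
    (fun f : EPath V (p + 1) =>
      ∑ q : Fin (p + 2), ((-1 : K) ^ (q : ℕ)) • Finsupp.single (f ∘ q.succAbove) (1 : K))

/-- The boundary operator `∂` on the regular part (i.e. on `R`). -/
noncomputable def bdry (K : Type*) [Field K] (V : Type*) (p : ℕ) :
    (EPath V (p + 1) →₀ K) →ₗ[K] (EPath V p →₀ K) :=
  (regProj K V p).comp (bdryFull K V p)

/-- The span of the regular elementary paths: the realization of `R_p` inside `Λ_p`. -/
noncomputable def regularMod (K : Type*) [Field K] (V : Type*) (p : ℕ) :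
    Submodule K (EPath V p →₀ K) :=
  Submodule.span K {x | ∃ f : EPath V p, IsRegularPath f ∧ x = Finsupp.single f (1 : K)}

/-- `A_p(G)`: the span of the allowed elementary paths. -/
noncomputable def allowedMod (K : Type*) [Field K] (V : Type*) (G : Dgraph V) (p : ℕ) :
    Submodule K (EPath V p →₀ K) :=
  Submodule.span K {x | ∃ f : EPath V p, IsAllowedPath G f ∧ x = Finsupp.single f (1 : K)}

/-- `Ω_p(G)`: the space of ∂-invariant `p`-paths. -/
noncomputable def Omega (K : Type*) [Field K] (V : Type*) (G : Dgraph V) :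
    (p : ℕ) → Submodule K (EPath V p →₀ K)
  | 0 => allowedMod K V G 0
  | (p + 1) => allowedMod K V G (p + 1) ⊓ (allowedMod K V G p).comap (bdry K V p)

/-- An `(a,b)`-cluster: every elementary path occurring with nonzero coefficient
starts at `a` and ends at `b`. -/
def IsCluster {K : Type*} [Field K] {V : Type*} {p : ℕ} (a b : V) (ω : EPath V p →₀ K) : Prop :=
  ∀ f ∈ ω.support, f 0 = a ∧ f (Fin.last p) = b

/-- A minimal ∂-invariant path: a nonzero element of `Ω_p` such that no nonzero
∂-invariant path is supported on a proper (nonempty) subset of its support. -/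
def IsMinimal (K : Type*) [Field K] {V : Type*} (G : Dgraph V) (p : ℕ)
    (ω : EPath V p →₀ K) : Prop :=
  ω ∈ Omega K V G p ∧ ω ≠ 0 ∧
    ∀ ω' : EPath V p →₀ K, ω' ∈ Omega K V G p → ω' ≠ 0 → ¬ (ω'.support ⊂ ω.support)

/-- A digraph map: every arrow goes to an arrow or collapses to a vertex. -/
structure DgraphMap {V W : Type*} (X : Dgraph V) (Y : Dgraph W) where
  toFun : V → W
  map_adj : ∀ ⦃u v : V⦄, X.Adj u v → Y.Adj (toFun u) (toFun v) ∨ toFun u = toFun v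

/-- The induced map `f_* : R_n(X) → R_n(Y)` (in the regular-part realization):
push forward elementary paths and kill the irregular ones. -/
noncomputable def inducedMap (K : Type*) [Field K] {V W : Type*} (φ : V → W) (p : ℕ) :
    (EPath V p →₀ K) →ₗ[K] (EPath W p →₀ K) :=
  (regProj K W p).comp (Finsupp.lmapDomain K K (fun f : EPath V p => φ ∘ f))

/-- Cyclic successor on `Fin m`. -/
def finRot {m : ℕ} (k : Fin m) : Fin m := ⟨((k : ℕ) + 1) % m, Nat.mod_lt _ k.pos⟩

/-- The vertices of the trapezohedron `T_m`. -/
inductive TVert (m : ℕ) : Type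
  | a : TVert m
  | b : TVert m
  | vi : Fin m → TVert m
  | vj : Fin m → TVert m

/-- The adjacency relation of the trapezohedron `T_m`:
`a → i_k`, `i_k → j_k`, `i_{k+1} → j_k`, `j_k → b` (indices mod `m`). -/
def TrapAdj (m : ℕ) : TVert m → TVert m → Prop
  | TVert.a, TVert.vi _ => True
  | TVert.vi k, TVert.vj l => k = l ∨ k = finRot l
  | TVert.vj _, TVert.b => True
  | _, _ => False

/-- The trapezohedron digraph `T_m`. -/
def Trap (m : ℕ) : Dgraph (TVert m) where
  Adj := TrapAdj m
  loopless := by intro v h; cases v <;> exact h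

/-- The trapezohedral path `τ_m`. -/
noncomputable def tau (K : Type*) [Field K] (m : ℕ) : EPath (TVert m) 3 →₀ K :=
  ∑ k : Fin m,
    (Finsupp.single ![TVert.a, TVert.vi k, TVert.vj k, TVert.b] (1 : K)
      - Finsupp.single ![TVert.a, TVert.vi (finRot k), TVert.vj k, TVert.b] (1 : K))

/-- The submodule of `(a,b)`-clusters. -/
def clusterMod (K : Type*) [Field K] (V : Type*) (p : ℕ) (a b : V) :
    Submodule K (EPath V p →₀ K) where
  carrier := {ω | ∀ f ∈ ω.support, f 0 = a ∧ f (Fin.last p) = b}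
  add_mem' := by
    intro x y hx hy f hf
    rcases Finset.mem_union.mp (Finsupp.support_add hf) with h | h
    exacts [hx f h, hy f h]
  zero_mem' := by intro f hf; simp at hf
  smul_mem' := by
    intro c x hx f hf
    exact hx f (Finsupp.support_smul hf)

/-- `Ω₃^{(a,b)}(G)`: the ∂-invariant `(a,b)`-clusters. -/
noncomputable def OmegaAB (K : Type*) [Field K] (V : Type*) (G : Dgraph V) (a b : V) :
    Submodule K (EPath V 3 →₀ K) :=
  Omega K V G 3 ⊓ clusterMod K V 3 a b

/-- Out-neighbourhood. -/
def Nplus {V : Type*} (G : Dgraph V) (v : V) : Set V := {w | G.Adj v w}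

/-- In-neighbourhood. -/
def Nminus {V : Type*} (G : Dgraph V) (v : V) : Set V := {w | G.Adj w v}

/-- `E(X,Y)`: the edges of `G` starting in `X` and ending in `Y`. -/
def Ebetween {V : Type*} (G : Dgraph V) (X Y : Set V) : Set (V × V) :=
  {p | p.1 ∈ X ∧ p.2 ∈ Y ∧ G.Adj p.1 p.2}

/-- `A = N⁺(a) \ {b}`. -/
def setA {V : Type*} (G : Dgraph V) (a b : V) : Set V := Nplus G a \ {b}

/-- `B = N⁻(b) \ {a}`. -/
def setB {V : Type*} (G : Dgraph V) (a b : V) : Set V := Nminus G b \ {a}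

/-- The vertex set of `H = Ind(A \ B, B \ A)`. -/
def Hverts {V : Type*} (G : Dgraph V) (a b : V) : Set V :=
  (setA G a b \ setB G a b) ∪ (setB G a b \ setA G a b)

/-- `H = Ind(A \ B, B \ A)` regarded as an undirected (simple) graph on its vertex set. -/
def Hgraph {V : Type*} (G : Dgraph V) (a b : V) : SimpleGraph (Hverts G a b) where
  Adj u v :=
    ((u : V) ∈ setA G a b \ setB G a b ∧ (v : V) ∈ setB G a b \ setA G a b ∧ G.Adj u v)
      ∨ ((v : V) ∈ setA G a b \ setB G a b ∧ (u : V) ∈ setB G a b \ setA G a b ∧ G.Adj v u)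
  symm := ⟨by intro u v h; exact h.symm⟩
  loopless := ⟨by
    intro u h
    rcases h with ⟨_, _, h3⟩ | ⟨_, _, h3⟩ <;> exact G.loopless _ h3⟩

/-- The set of vertices of `G` belonging to the connected component `c` of `H`. -/
def compVerts {V : Type*} (G : Dgraph V) (a b : V)
    (c : (Hgraph G a b).ConnectedComponent) : Set V :=
  {v | ∃ h : v ∈ Hverts G a b, (Hgraph G a b).connectedComponentMk ⟨v, h⟩ = c}

/-- The set `S_k` associated to a connected component of `H`. -/
def Sset {V : Type*} (G : Dgraph V) (a b : V)
    (c : (Hgraph G a b).ConnectedComponent) : Set (V × V) :=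
  Ebetween G (compVerts G a b c ∩ (setA G a b \ setB G a b))
      ((Nplus G a ∪ {a}) ∩ Nminus G b)
    ∪ Ebetween G (Nplus G a ∩ (Nminus G b ∪ {b}))
      (compVerts G a b c ∩ (setB G a b \ setA G a b))

/-!
Work modulo allowed 2-paths. For an allowed path `a → x → y → b` the boundary of `e_{axyb}` is
congruent to `e_{axb} - e_{ayb}`, and `e_{avb}` is congruent to `0` when `v ∈ N⁺(a) ∩ N⁻(b)` or
`v ∈ {a, b}`. So the path through an edge of `S_k` leaves a single defect `±e_{awb}` with `w` a
vertex of `H_k`, while the path through an arrow `x → y` of `H` leaves `e_{axb} - e_{ayb}`. Along a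
walk in `H_k` joining the two vertices `w, w'` these defects telescope, so a suitable combination of
the two `S_k`-paths and the paths of the walk is ∂-invariant.
-/

open Finsupp

section Paths

variable {K : Type*} [Field K] {V : Type*}

lemma regProj_single {p : ℕ} (f : EPath V p) (c : K) :
    regProj K V p (single f c) = if IsRegularPath f then single f c else 0 := by
  rw [regProj, linearCombination_single]
  split_ifs <;> simp

lemma IsAllowedPath.isRegularPath {G : Dgraph V} {p : ℕ} {f : EPath V p}
    (h : IsAllowedPath G f) : IsRegularPath f :=
  fun k hk => G.loopless _ (by simpa [hk] using h k)

lemma isAllowedPath_three {G : Dgraph V} {x y z : V} (hxy : G.Adj x y) (hyz : G.Adj y z) :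
    IsAllowedPath G ![x, y, z] := by
  intro k
  fin_cases k
  exacts [hxy, hyz]

lemma isAllowedPath_four {G : Dgraph V} {w x y z : V} (hwx : G.Adj w x) (hxy : G.Adj x y)
    (hyz : G.Adj y z) : IsAllowedPath G ![w, x, y, z] := by
  intro k
  fin_cases k
  exacts [hwx, hxy, hyz]

lemma single_mem_allowedMod (G : Dgraph V) {p : ℕ} {f : EPath V p} (h : IsAllowedPath G f)
    (c : K) : single f c ∈ allowedMod K V G p := by
  simpa using (allowedMod K V G p).smul_mem c (Submodule.subset_span ⟨f, h, rfl⟩)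

lemma supported_le_allowedMod {G : Dgraph V} {p : ℕ} {s : Set (EPath V p)}
    (hs : ∀ f ∈ s, IsAllowedPath G f) : supported K K s ≤ allowedMod K V G p := by
  rw [supported_eq_span_single, Submodule.span_le]
  rintro _ ⟨f, hf, rfl⟩
  exact single_mem_allowedMod G (hs f hf) 1

lemma supported_le_clusterMod {p : ℕ} {a b : V} {s : Set (EPath V p)}
    (hs : ∀ f ∈ s, f 0 = a ∧ f (Fin.last p) = b) : supported K K s ≤ clusterMod K V p a b :=
  fun _ hω f hf => hs f (hω hf)

lemma bdryFull_single_four (w x y z : V) :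
    bdryFull K V 2 (single ![w, x, y, z] 1) =
      single ![x, y, z] 1 - single ![w, y, z] 1 + single ![w, x, z] 1 - single ![w, x, y] 1 := by
  have hfaces : ∀ q : Fin 4, (![w, x, y, z] : EPath V 3) ∘ q.succAbove =
      ![![x, y, z], ![w, y, z], ![w, x, z], ![w, x, y]] q := by
    intro q; fin_cases q <;> ext i <;> fin_cases i <;> rfl
  rw [bdryFull, linearCombination_single, one_smul, Fin.sum_univ_four]
  simp only [hfaces]
  norm_num [single_neg]
  abel

variable (K) in
noncomputable def bdryDefect (G : Dgraph V) :
    (EPath V 3 →₀ K) →ₗ[K] (EPath V 2 →₀ K) ⧸ allowedMod K V G 2 :=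
  (allowedMod K V G 2).mkQ ∘ₗ bdry K V 2

variable (K) in
noncomputable def midDefect (G : Dgraph V) (a b x : V) :
    (EPath V 2 →₀ K) ⧸ allowedMod K V G 2 :=
  (allowedMod K V G 2).mkQ (regProj K V 2 (single ![a, x, b] 1))

lemma mem_OmegaAB_of_mem_supported {G : Dgraph V} {a b : V} {s : Set (EPath V 3)}
    (hs : ∀ f ∈ s, IsAllowedPath G f ∧ f 0 = a ∧ f (Fin.last 3) = b) {ω : EPath V 3 →₀ K}
    (hω : ω ∈ supported K K s) (hdefect : bdryDefect K G ω = 0) : ω ∈ OmegaAB K V G a b :=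
  ⟨⟨supported_le_allowedMod (fun f hf => (hs f hf).1) hω,
    (Submodule.Quotient.mk_eq_zero (allowedMod K V G 2) (x := bdry K V 2 ω)).1 hdefect⟩,
    supported_le_clusterMod (fun f hf => (hs f hf).2) hω⟩

lemma bdryDefect_single_four {G : Dgraph V} {a x y b : V}
    (hax : G.Adj a x) (hxy : G.Adj x y) (hyb : G.Adj y b) :
    bdryDefect K G (single ![a, x, y, b] 1) = midDefect K G a b x - midDefect K G a b y := by
  have hfront := isAllowedPath_three hxy hyb
  have hback := isAllowedPath_three hax hxy
  have hfront0 : (allowedMod K V G 2).mkQ (single ![x, y, b] 1) = 0 :=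
    (Submodule.Quotient.mk_eq_zero _).2 (single_mem_allowedMod G hfront 1)
  have hback0 : (allowedMod K V G 2).mkQ (single ![a, x, y] 1) = 0 :=
    (Submodule.Quotient.mk_eq_zero _).2 (single_mem_allowedMod G hback 1)
  rw [bdryDefect, LinearMap.comp_apply, bdry, LinearMap.comp_apply, bdryFull_single_four]
  simp only [map_sub, map_add, regProj_single, if_pos hfront.isRegularPath,
    if_pos hback.isRegularPath, hfront0, hback0, midDefect]
  abel

lemma midDefect_eq_zero {G : Dgraph V} {a b x : V} (hax : G.Adj a x) (hxb : G.Adj x b) :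
    midDefect K G a b x = 0 := by
  have h := isAllowedPath_three hax hxb
  rw [midDefect, Submodule.mkQ_apply, Submodule.Quotient.mk_eq_zero, regProj_single,
    if_pos h.isRegularPath]
  exact single_mem_allowedMod G h 1

lemma midDefect_left {G : Dgraph V} {a b : V} : midDefect K G a b a = 0 := by
  rw [midDefect, regProj_single, if_neg fun h => h 0 rfl, map_zero]

lemma midDefect_right {G : Dgraph V} {a b : V} : midDefect K G a b b = 0 := by
  rw [midDefect, regProj_single, if_neg fun h => h 1 rfl, map_zero]

end Paths

section Component

variable {K : Type*} [Field K] {V : Type*} {G : Dgraph V} {a b : V}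
  {c : (Hgraph G a b).ConnectedComponent}

variable (G a b c) in
def componentPaths : Set (EPath V 3) :=
  {f | f 0 = a ∧ f 1 ∈ compVerts G a b c ∩ (setA G a b \ setB G a b) ∧
    f 2 ∈ compVerts G a b c ∩ (setB G a b \ setA G a b) ∧ G.Adj (f 1) (f 2) ∧ f 3 = b}

lemma isAllowedPath_of_mem_componentPaths {f : EPath V 3} (hf : f ∈ componentPaths G a b c) :
    IsAllowedPath G f := by
  obtain ⟨h0, ⟨-, ⟨hax, -⟩, -⟩, ⟨-, ⟨hyb, -⟩, -⟩, hxy, h3⟩ := hf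
  intro k
  fin_cases k
  · exact h0 ▸ hax
  · exact hxy
  · exact h3 ▸ hyb

lemma exists_bdryDefect_eq_sub_of_adj {z z' : Hverts G a b} (hzz' : (Hgraph G a b).Adj z z')
    (hz : (Hgraph G a b).connectedComponentMk z = c) :
    ∃ η ∈ supported K K (componentPaths G a b c),
      bdryDefect K G η = midDefect K G a b z - midDefect K G a b z' := by
  have hz' : (Hgraph G a b).connectedComponentMk z' = c :=
    (SimpleGraph.ConnectedComponent.sound hzz'.reachable).symm.trans hz
  rcases hzz' with ⟨hx, hy, hxy⟩ | ⟨hx, hy, hxy⟩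
  · refine ⟨single ![a, z, z', b] 1, single_mem_supported K _ ?_, ?_⟩
    · exact ⟨rfl, ⟨⟨z.2, hz⟩, hx⟩, ⟨⟨z'.2, hz'⟩, hy⟩, hxy, rfl⟩
    · exact bdryDefect_single_four hx.1.1 hxy hy.1.1
  · refine ⟨-single ![a, z', z, b] 1, Submodule.neg_mem _ (single_mem_supported K _ ?_), ?_⟩
    · exact ⟨rfl, ⟨⟨z'.2, hz'⟩, hx⟩, ⟨⟨z.2, hz⟩, hy⟩, hxy, rfl⟩
    · rw [map_neg, bdryDefect_single_four hx.1.1 hxy hy.1.1, neg_sub]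

lemma exists_bdryDefect_eq_sub_of_walk {z z' : Hverts G a b} (p : (Hgraph G a b).Walk z z')
    (hz : (Hgraph G a b).connectedComponentMk z = c) :
    ∃ η ∈ supported K K (componentPaths G a b c),
      bdryDefect K G η = midDefect K G a b z - midDefect K G a b z' := by
  induction p with
  | nil => exact ⟨0, zero_mem _, by rw [map_zero, sub_self]⟩
  | cons hadj q ih =>
    obtain ⟨ζ, hζ, hζd⟩ := exists_bdryDefect_eq_sub_of_adj (K := K) hadj hz
    obtain ⟨η, hη, hηd⟩ := ih ((SimpleGraph.ConnectedComponent.sound hadj.reachable).symm.trans hz)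
    exact ⟨ζ + η, add_mem hζ hη, by rw [map_add, hζd, hηd, sub_add_sub_cancel]⟩

lemma adj_of_mem_Sset {e : V × V} (he : e ∈ Sset G a b c) :
    G.Adj a e.1 ∧ G.Adj e.1 e.2 ∧ G.Adj e.2 b := by
  rcases he with ⟨h1, h2, h12⟩ | ⟨h1, h2, h12⟩
  exacts [⟨h1.2.1.1, h12, h2.2⟩, ⟨h1.1, h12, h2.2.1.1⟩]

lemma isAllowedPath_of_mem_Sset {e : V × V} (he : e ∈ Sset G a b c) :
    IsAllowedPath G ![a, e.1, e.2, b] :=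
  let ⟨hae, hee, heb⟩ := adj_of_mem_Sset he
  isAllowedPath_four hae hee heb

lemma notMem_componentPaths_of_mem_Sset {e : V × V} (he : e ∈ Sset G a b c) :
    ![a, e.1, e.2, b] ∉ componentPaths G a b c := by
  rintro ⟨-, ⟨-, hA⟩, ⟨-, hB⟩, -⟩
  rcases he with ⟨-, ⟨h2, h2b⟩, -⟩ | ⟨⟨h1, h1b⟩, -, -⟩
  · rcases h2 with h2 | h2
    · exact hB.2 ⟨h2, fun h => G.loopless b (h ▸ h2b)⟩
    · exact hB.1.2 h2
  · rcases h1b with h1b | h1b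
    · exact hA.2 ⟨h1b, fun h => G.loopless a (h ▸ h1)⟩
    · exact hA.1.2 h1b

lemma exists_bdryDefect_single_eq_smul_of_mem_Sset {e : V × V} (he : e ∈ Sset G a b c) :
    ∃ w : Hverts G a b, (Hgraph G a b).connectedComponentMk w = c ∧ ∃ ε : K, ε ≠ 0 ∧
      bdryDefect K G (single ![a, e.1, e.2, b] 1) = ε • midDefect K G a b w := by
  obtain ⟨hae, hee, heb⟩ := adj_of_mem_Sset he
  rw [bdryDefect_single_four hae hee heb]
  rcases he with ⟨⟨⟨hv, hc⟩, -⟩, h2, -⟩ | ⟨h1, ⟨⟨hv, hc⟩, -⟩, -⟩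
  · refine ⟨⟨e.1, hv⟩, hc, 1, one_ne_zero, ?_⟩
    have h0 : midDefect K G a b e.2 = 0 := by
      rcases h2.1 with h | h
      · exact midDefect_eq_zero h h2.2
      · rw [Set.mem_singleton_iff.1 h]; exact midDefect_left
    rw [h0, sub_zero, one_smul]
  · refine ⟨⟨e.2, hv⟩, hc, -1, by norm_num, ?_⟩
    have h0 : midDefect K G a b e.1 = 0 := by
      rcases h1.2 with h | h
      · exact midDefect_eq_zero h1.1 h
      · rw [Set.mem_singleton_iff.1 h]; exact midDefect_right
    rw [h0, zero_sub, neg_one_smul]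

end Component

theorem statement18_general (K : Type*) [Field K] {V : Type*} (G : Dgraph V) (a b : V)
    (c : (Hgraph G a b).ConnectedComponent)
    (e e' : V × V) (he : e ∈ Sset G a b c) (he' : e' ∈ Sset G a b c) (hne : e ≠ e') :
    ∃ ω ∈ OmegaAB K V G a b,
      ω ![a, e.1, e.2, b] ≠ 0 ∧ ω ![a, e'.1, e'.2, b] ≠ 0 ∧
      ∀ f ∈ ω.support, f ≠ ![a, e.1, e.2, b] → f ≠ ![a, e'.1, e'.2, b] →
        f 1 ∈ compVerts G a b c ∩ (setA G a b \ setB G a b) ∧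
        f 2 ∈ compVerts G a b c ∩ (setB G a b \ setA G a b) ∧
        G.Adj (f 1) (f 2) := by
  obtain ⟨w, hw, ε, hε, hP⟩ := exists_bdryDefect_single_eq_smul_of_mem_Sset (K := K) he
  obtain ⟨w', hw', ε', hε', hP'⟩ := exists_bdryDefect_single_eq_smul_of_mem_Sset (K := K) he'
  obtain ⟨p⟩ := SimpleGraph.ConnectedComponent.exact (hw.trans hw'.symm)
  obtain ⟨η, hη, hηd⟩ := exists_bdryDefect_eq_sub_of_walk (K := K) p hw
  set P : EPath V 3 := ![a, e.1, e.2, b]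
  set P' : EPath V 3 := ![a, e'.1, e'.2, b]
  have hηP : η P = 0 :=
    notMem_support_iff.1 fun h => notMem_componentPaths_of_mem_Sset he (hη h)
  have hηP' : η P' = 0 :=
    notMem_support_iff.1 fun h => notMem_componentPaths_of_mem_Sset he' (hη h)
  have hPP' : P ≠ P' := fun h => hne (Prod.ext (congrFun h 1) (congrFun h 2))
  -- chosen so that the defects `ε • [a w b]` and `ε' • [a w' b]` of the two `S`-paths cancel
  -- against the telescoped defect `[a w b] - [a w' b]` of the walk
  set ω := ε' • single P 1 - (ε * ε') • η - ε • single P' 1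
  have hωT : ω ∈ supported K K ({P, P'} ∪ componentPaths G a b c) :=
    sub_mem (sub_mem (Submodule.smul_mem _ _ (single_mem_supported K _ (by simp)))
      (Submodule.smul_mem _ _ (supported_mono Set.subset_union_right hη)))
      (Submodule.smul_mem _ _ (single_mem_supported K _ (by simp)))
  refine ⟨ω, mem_OmegaAB_of_mem_supported ?_ hωT ?_, ?_, ?_, ?_⟩
  · rintro f ((rfl | rfl) | hf)
    exacts [⟨isAllowedPath_of_mem_Sset he, rfl, rfl⟩, ⟨isAllowedPath_of_mem_Sset he', rfl, rfl⟩,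
      ⟨isAllowedPath_of_mem_componentPaths hf, hf.1, hf.2.2.2.2⟩]
  · simp only [ω, map_sub, map_smul, hP, hP', hηd]
    module
  · simp [ω, hηP, hPP', hε']
  · simp [ω, hηP', hPP'.symm, hε]
  · intro f hf hfP hfP'
    obtain ⟨-, ⟨hx, hy, hxy, -⟩⟩ : f ∈ componentPaths G a b c := by
      simpa [hfP, hfP'] using hωT hf
    exact ⟨hx, hy, hxy⟩

theorem statement18 (K : Type*) [Field K] {V : Type*} [Fintype V] (G : Dgraph V) (a b : V)
    (c : (Hgraph G a b).ConnectedComponent)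
    (hS : 2 ≤ (Sset G a b c).ncard)
    (e e' : V × V) (he : e ∈ Sset G a b c) (he' : e' ∈ Sset G a b c) (hne : e ≠ e') :
    ∃ ω ∈ OmegaAB K V G a b,
      ω ![a, e.1, e.2, b] ≠ 0 ∧ ω ![a, e'.1, e'.2, b] ≠ 0 ∧
      ∀ f ∈ ω.support, f ≠ ![a, e.1, e.2, b] → f ≠ ![a, e'.1, e'.2, b] →
        f 1 ∈ compVerts G a b c ∩ (setA G a b \ setB G a b) ∧
        f 2 ∈ compVerts G a b c ∩ (setB G a b \ setA G a b) ∧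
        G.Adj (f 1) (f 2) :=
  statement18_general K G a b c e e' he he' hne
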